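/- On ℝ⁶ with coordinates (a, b, p, q, x, y), each of the vector fields V₁, V₂, V₃ annihilates the determinant function f(a,b,p,q,x,y) = aq − bp: for every point m ∈ ℝ⁶ and each i = 1,2,3, the directional derivative Df(m)(Vᵢ(m)) = 0; consequently every pointwise linear combination of V₁, V₂, V₃ annihilates f. -/

import Mathlib

/-!
Writing `M = [[a, b], [p, q]]` for the linear part, each `Vᵢ(m)` has linear part `M Nᵢ` with
`N₁ = [[-1, -1], [1, 1]]`, `N₂ = [[0, 0], [1, 0]]`, `N₃ = [[0, -1], [0, 0]]`, all traceless, so by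
Jacobi's formula `Df(m)(Vᵢ(m)) = det M · tr Nᵢ = 0`; concretely, the differential of `f` is
`v ↦ a v_q + q v_a - b v_p - p v_b`, and the three contractions cancel identically.
-/

/-- Coordinates on ℝ⁶ are ordered `(a, b, p, q, x, y)`, i.e. indices `0,…,5`. -/
def V1 : (Fin 6 → ℝ) → (Fin 6 → ℝ) := fun m =>
  ![-(m 0 - m 1), -(m 0 - m 1), -(m 2 - m 3), -(m 2 - m 3), m 0 - m 1, m 2 - m 3]

def V2 : (Fin 6 → ℝ) → (Fin 6 → ℝ) := fun m => ![m 1, 0, m 3, 0, 0, 0]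

def V3 : (Fin 6 → ℝ) → (Fin 6 → ℝ) := fun m => ![0, -(m 0), 0, -(m 2), 0, 0]

/-- The determinant function `f = aq − bp`. -/
def detf : (Fin 6 → ℝ) → ℝ := fun m => m 0 * m 3 - m 1 * m 2

open ContinuousLinearMap in
lemma hasFDerivAt_detf (m : Fin 6 → ℝ) :
    HasFDerivAt detf
      (m 0 • proj 3 + m 3 • proj 0 - (m 1 • proj 2 + m 2 • proj 1) : (Fin 6 → ℝ) →L[ℝ] ℝ) m :=
  ((hasFDerivAt_apply 0 m).mul (hasFDerivAt_apply 3 m)).sub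
    ((hasFDerivAt_apply 1 m).mul (hasFDerivAt_apply 2 m))

lemma fderiv_detf_apply (m v : Fin 6 → ℝ) :
    fderiv ℝ detf m v = m 0 * v 3 + m 3 * v 0 - (m 1 * v 2 + m 2 * v 1) := by
  simp [(hasFDerivAt_detf m).fderiv]

lemma fderiv_detf_V1 (m : Fin 6 → ℝ) : fderiv ℝ detf m (V1 m) = 0 := by
  simp only [fderiv_detf_apply, V1, Matrix.cons_val, Matrix.cons_val_zero, Matrix.cons_val_one]
  ring

lemma fderiv_detf_V2 (m : Fin 6 → ℝ) : fderiv ℝ detf m (V2 m) = 0 := by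
  simp only [fderiv_detf_apply, V2, Matrix.cons_val, Matrix.cons_val_zero, Matrix.cons_val_one]
  ring

lemma fderiv_detf_V3 (m : Fin 6 → ℝ) : fderiv ℝ detf m (V3 m) = 0 := by
  simp only [fderiv_detf_apply, V3, Matrix.cons_val, Matrix.cons_val_zero, Matrix.cons_val_one]
  ring

theorem primitive_moves_annihilate_det :
    (∀ m : Fin 6 → ℝ,
      fderiv ℝ detf m (V1 m) = 0 ∧ fderiv ℝ detf m (V2 m) = 0 ∧
      fderiv ℝ detf m (V3 m) = 0) ∧
    (∀ (g₁ g₂ g₃ : (Fin 6 → ℝ) → ℝ) (m : Fin 6 → ℝ),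
      fderiv ℝ detf m (g₁ m • V1 m + g₂ m • V2 m + g₃ m • V3 m) = 0) :=
  ⟨fun m => ⟨fderiv_detf_V1 m, fderiv_detf_V2 m, fderiv_detf_V3 m⟩,
    fun g₁ g₂ g₃ m => by
      simp only [map_add, map_smul, fderiv_detf_V1, fderiv_detf_V2, fderiv_detf_V3, smul_zero,
        add_zero]⟩
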